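/- arXiv:1301.2806 — 2 statements merged into one kernel-verified Lean document; each statement's English description precedes it below -/
import Mathlib

section
/- Let λ : ℝ → ℝ be C¹ with λ' Lipschitz with constant L. Then for all real x₁, x₂ and θ₁, θ₂ ≥ 0, setting χ = x₁ - x₂ and θ = θ₁ - θ₂, one has -(λ(x₁) - λ(x₂))·θ + (λ'(x₁)θ₁ - λ'(x₂)θ₂)·χ ≤ (L/2)·(θ₁ + θ₂)·χ². -/
/- The left-hand side is the sum of the first-order Taylor remainders of f at x₁ and at x₂,
weighted by θ₁ ≥ 0 and θ₂ ≥ 0, and a Lipschitz derivative bounds each remainder by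
(L/2)(x₁ - x₂)²: the gap g(t) = f t - f'(a) t - (L/2)(t - a)² has derivative
f'(t) - f'(a) - L(t - a), which is ≤ 0 right of a and ≥ 0 left of it, so g peaks at a. -/

lemma taylor_remainder_le_of_abs_deriv_sub_le {f : ℝ → ℝ} {L : ℝ} (hf : Differentiable ℝ f)
    (hL : ∀ a b : ℝ, |deriv f a - deriv f b| ≤ L * |a - b|) (a b : ℝ) :
    f b - f a - deriv f a * (b - a) ≤ L / 2 * (b - a) ^ 2 := by
  set g : ℝ → ℝ := fun s => f s - deriv f a * s - L / 2 * (s - a) ^ 2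
  have hg (t : ℝ) : HasDerivAt g (deriv f t - deriv f a - L * (t - a)) t := by
    refine (((hf t).hasDerivAt.sub ((hasDerivAt_id' t).const_mul (deriv f a))).sub
      ((((hasDerivAt_id' t).sub_const a).pow 2).const_mul (L / 2))).congr_deriv ?_
    norm_num
    ring
  have hg_diff : Differentiable ℝ g := fun t => (hg t).differentiableAt
  suffices g b ≤ g a by simp only [g] at this; linarith
  rcases le_total a b with hab | hba
  · refine antitoneOn_of_deriv_nonpos (convex_Ici a) hg_diff.continuous.continuousOn
      hg_diff.differentiableOn (fun t ht => ?_) Set.self_mem_Ici hab hab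
    rw [interior_Ici, Set.mem_Ioi] at ht
    have := hL t a
    rw [abs_of_pos (sub_pos.mpr ht)] at this
    rw [(hg t).deriv]
    linarith [le_abs_self (deriv f t - deriv f a)]
  · refine monotoneOn_of_deriv_nonneg (convex_Iic a) hg_diff.continuous.continuousOn
      hg_diff.differentiableOn (fun t ht => ?_) hba Set.self_mem_Iic hba
    rw [interior_Iic, Set.mem_Iio] at ht
    have := hL a t
    rw [abs_of_pos (sub_pos.mpr ht)] at this
    rw [(hg t).deriv]
    linarith [le_abs_self (deriv f a - deriv f t)]

theorem stmt3 (f : ℝ → ℝ) (L : ℝ) (hf : ContDiff ℝ 1 f)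
    (hL : ∀ a b : ℝ, |deriv f a - deriv f b| ≤ L * |a - b|)
    (x₁ x₂ θ₁ θ₂ : ℝ) (h1 : 0 ≤ θ₁) (h2 : 0 ≤ θ₂) :
    -(f x₁ - f x₂) * (θ₁ - θ₂) + (deriv f x₁ * θ₁ - deriv f x₂ * θ₂) * (x₁ - x₂)
      ≤ L / 2 * (θ₁ + θ₂) * (x₁ - x₂) ^ 2 := by
  have hd : Differentiable ℝ f := hf.differentiable one_ne_zero
  have r₁ := mul_le_mul_of_nonneg_left (taylor_remainder_le_of_abs_deriv_sub_le hd hL x₁ x₂) h1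
  have r₂ := mul_le_mul_of_nonneg_left (taylor_remainder_le_of_abs_deriv_sub_le hd hL x₂ x₁) h2
  calc -(f x₁ - f x₂) * (θ₁ - θ₂) + (deriv f x₁ * θ₁ - deriv f x₂ * θ₂) * (x₁ - x₂)
      = θ₁ * (f x₂ - f x₁ - deriv f x₁ * (x₂ - x₁))
        + θ₂ * (f x₁ - f x₂ - deriv f x₂ * (x₁ - x₂)) := by ring
    _ ≤ θ₁ * (L / 2 * (x₂ - x₁) ^ 2) + θ₂ * (L / 2 * (x₁ - x₂) ^ 2) := add_le_add r₁ r₂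
    _ = L / 2 * (θ₁ + θ₂) * (x₁ - x₂) ^ 2 := by ring
end

section
/- Let T > 0, κ₀ > 0, κ* > 0, and (k_ε) a family in L¹(0,T) with ∫₀ᵀ (κ₀ v + k_ε*v)v dt ≥ κ*‖v‖²_{L²(0,T)} for all v ∈ L²(0,T) and all ε > 0, and suppose 1*k_ε → κ₀' in L¹(0,T) as ε → 0 for some κ₀' ∈ ℝ. Then κ₀ + κ₀' ≥ κ* > 0. -/
/-!
Testing the coercivity inequality with `v ≡ 1` gives `κstar T ≤ κ₀ T + ∫₀ᵀ (1 * k_ε)`, since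
`k_ε * 1 = 1 * k_ε`. As `1 * k_ε → κ₀'` in `L¹(0,T)`, the right-hand side tends to
`(κ₀ + κ₀') T`; dividing by `T > 0` gives `κstar ≤ κ₀ + κ₀'`.
-/

open MeasureTheory Filter Topology

/-- `∫₀ᵀ (κ₀ v + k * v) v ≥ κ ‖v‖²_{L²(0,T)}` on `L²(0,T)`, with `*` the Volterra convolution. -/
def IsCoerciveVolterraKernel (T κ₀ κ : ℝ) (k : ℝ → ℝ) : Prop :=
  ∀ v : ℝ → ℝ, MemLp v 2 (volume.restrict (Set.Ioc 0 T)) →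
    κ * ∫ t in (0:ℝ)..T, v t ^ 2 ≤ ∫ t in (0:ℝ)..T, (κ₀ * v t + ∫ s in (0:ℝ)..t, k (t - s) * v s) * v t

theorem intervalIntegrable_primitive {f : ℝ → ℝ} {a b : ℝ}
    (hf : IntervalIntegrable f volume a b) :
    IntervalIntegrable (fun t => ∫ s in a..t, f s) volume a b :=
  (intervalIntegral.continuousOn_primitive_interval' hf Set.left_mem_uIcc).intervalIntegrable

theorem integral_zero_comp_sub_left (f : ℝ → ℝ) (t : ℝ) :
    ∫ s in (0:ℝ)..t, f (t - s) = ∫ s in (0:ℝ)..t, f s := by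
  simp [intervalIntegral.integral_comp_sub_left f t]

theorem tendsto_intervalIntegral_of_tendsto_integral_abs_sub {ι : Type*} {l : Filter ι}
    {g : ι → ℝ → ℝ} {a b c : ℝ} (hab : a ≤ b) (hg : ∀ᶠ i in l, IntervalIntegrable (g i) volume a b)
    (hL1 : Tendsto (fun i => ∫ t in a..b, |g i t - c|) l (𝓝 0)) :
    Tendsto (fun i => ∫ t in a..b, g i t) l (𝓝 ((b - a) * c)) := by
  rw [← tendsto_sub_nhds_zero_iff]
  refine squeeze_zero_norm' ?_ hL1
  filter_upwards [hg] with i hgi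
  have hsub : (∫ t in a..b, g i t) - (b - a) * c = ∫ t in a..b, (g i t - c) := by
    simp [intervalIntegral.integral_sub hgi intervalIntegrable_const]
  rw [Real.norm_eq_abs, hsub]
  exact intervalIntegral.abs_integral_le_integral_abs hab

theorem IsCoerciveVolterraKernel.le_integral_primitive {T κ₀ κ : ℝ} {k : ℝ → ℝ}
    (hk : IsCoerciveVolterraKernel T κ₀ κ k)
    (hkint : IntervalIntegrable k volume 0 T) :
    κ * T ≤ κ₀ * T + ∫ t in (0:ℝ)..T, ∫ s in (0:ℝ)..t, k s := by
  have : IsFiniteMeasure (volume.restrict (Set.Ioc (0:ℝ) T)) :=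
    isFiniteMeasure_restrict.mpr measure_Ioc_lt_top.ne
  have h := hk (fun _ => 1) (memLp_const 1)
  simp only [one_pow, mul_one, integral_zero_comp_sub_left] at h
  rwa [intervalIntegral.integral_add intervalIntegrable_const (intervalIntegrable_primitive hkint),
    intervalIntegral.integral_const, intervalIntegral.integral_const, smul_eq_mul, smul_eq_mul,
    sub_zero, mul_one, mul_comm T κ₀] at h

theorem stmt17_general (T κ₀ κstar κ₀' : ℝ) (hT : 0 < T) (hκstar : 0 < κstar)
    (k : ℝ → ℝ → ℝ) (hkint : ∀ ε > (0:ℝ), IntegrableOn (k ε) (Set.Ioc 0 T))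
    (hcoer : ∀ ε > (0:ℝ), ∀ v : ℝ → ℝ, MemLp v 2 (volume.restrict (Set.Ioc 0 T)) →
      κstar * ∫ t in (0:ℝ)..T, v t ^ 2 ≤
        ∫ t in (0:ℝ)..T, (κ₀ * v t + ∫ s in (0:ℝ)..t, k ε (t - s) * v s) * v t)
    (hconv : Filter.Tendsto
      (fun ε => ∫ t in (0:ℝ)..T, |(∫ s in (0:ℝ)..t, k ε s) - κ₀'|)
      (nhdsWithin 0 (Set.Ioi 0)) (nhds 0)) :
    κstar ≤ κ₀ + κ₀' ∧ 0 < κ₀ + κ₀' := by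
  have hkint' : ∀ ε > (0:ℝ), IntervalIntegrable (k ε) volume 0 T := fun ε hε =>
    (intervalIntegrable_iff_integrableOn_Ioc_of_le hT.le).mpr (hkint ε hε)
  have hlim := tendsto_intervalIntegral_of_tendsto_integral_abs_sub hT.le
    (eventually_nhdsWithin_of_forall fun ε hε => intervalIntegrable_primitive (hkint' ε hε)) hconv
  have hscaled : κstar * T ≤ κ₀ * T + (T - 0) * κ₀' :=
    ge_of_tendsto (x := 𝓝[>] 0) (tendsto_const_nhds.add hlim) <|
      eventually_nhdsWithin_of_forall fun ε hε =>
        IsCoerciveVolterraKernel.le_integral_primitive (hcoer ε hε) (hkint' ε hε)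
  have hle : κstar ≤ κ₀ + κ₀' := le_of_mul_le_mul_right (by linarith) hT
  exact ⟨hle, hκstar.trans_le hle⟩

theorem stmt17 (T κ₀ κstar κ₀' : ℝ) (hT : 0 < T) (hκ₀ : 0 < κ₀) (hκstar : 0 < κstar)
    (k : ℝ → ℝ → ℝ) (hkint : ∀ ε > (0:ℝ), IntegrableOn (k ε) (Set.Ioc 0 T))
    (hcoer : ∀ ε > (0:ℝ), ∀ v : ℝ → ℝ, MemLp v 2 (volume.restrict (Set.Ioc 0 T)) →
      κstar * ∫ t in (0:ℝ)..T, v t ^ 2 ≤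
        ∫ t in (0:ℝ)..T, (κ₀ * v t + ∫ s in (0:ℝ)..t, k ε (t - s) * v s) * v t)
    (hconv : Filter.Tendsto
      (fun ε => ∫ t in (0:ℝ)..T, |(∫ s in (0:ℝ)..t, k ε s) - κ₀'|)
      (nhdsWithin 0 (Set.Ioi 0)) (nhds 0)) :
    κstar ≤ κ₀ + κ₀' ∧ 0 < κ₀ + κ₀' :=
  stmt17_general T κ₀ κstar κ₀' hT hκstar k hkint hcoer hconv
end
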